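/- arXiv:0810.5697 — 2 statements merged into one kernel-verified Lean document; each statement's English description precedes it below -/
import Mathlib

section
/- Let (E, ⟨·,·⟩) be a finite-dimensional real inner product space with orthonormal basis (e_i)_{i∈I}, let b : E × E → E be an ℝ-bilinear map, and let D : E → E be a linear map that is symmetric (⟨Dx, y⟩ = ⟨x, Dy⟩ for all x, y) and is a derivation of b (D(b(x,y)) = b(Dx, y) + b(x, Dy) for all x, y). Suppose each basis vector is an eigenvector of D, say D(e_i) = d(i) • e_i for a function d : I → ℝ. If X and Y are eigenvectors of D with DX = α • X, DY = β • Y, and α ≠ β, then F_b(X,Y) = 0; that is, the moment map of the change-of-basis representation preserves the eigenspace decomposition of a symmetric derivation. -/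
open scoped RealInnerProductSpace

private lemma eig_orth {E : Type*} [NormedAddCommGroup E] [InnerProductSpace ℝ E]
    (D : E →ₗ[ℝ] E) (hsymm : ∀ x y : E, ⟪D x, y⟫ = ⟪x, D y⟫)
    {v w : E} {μ ν : ℝ} (hv : D v = μ • v) (hw : D w = ν • w) (h : μ ≠ ν) :
    ⟪v, w⟫ = 0 := by
  have h1 : μ * ⟪v, w⟫ = ν * ⟪v, w⟫ := by
    have := hsymm v w
    rw [hv, hw, real_inner_smul_left, real_inner_smul_right] at this
    linarith
  have : (μ - ν) * ⟪v, w⟫ = 0 := by ring_nf; linarith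
  rcases mul_eq_zero.mp this with h' | h'
  · exact absurd (sub_eq_zero.mp h') h
  · exact h'

/-- Let `b` be a bilinear map on a finite-dimensional real inner product space `E` with
orthonormal basis `(e i)`, and let `D` be a symmetric linear map which is a derivation
of `b` and diagonalizes in the basis `(e i)`.  If `X`, `Y` are eigenvectors of `D` with
distinct eigenvalues `α ≠ β`, then the moment-map pairing
`F_b(X,Y) = −4 Σ ⟨b(X,e_i),e_j⟩⟨b(Y,e_i),e_j⟩ + 2 Σ ⟨b(e_i,e_j),X⟩⟨b(e_i,e_j),Y⟩`
vanishes: the moment map preserves the eigenspace decomposition of `D`. -/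
theorem momentMap_detected_along_derivation_eigenspaces
    (E : Type*) [NormedAddCommGroup E] [InnerProductSpace ℝ E] [FiniteDimensional ℝ E]
    (I : Type*) [Fintype I] (e : OrthonormalBasis I ℝ E)
    (b : E →ₗ[ℝ] E →ₗ[ℝ] E) (D : E →ₗ[ℝ] E)
    (hsymm : ∀ x y : E, ⟪D x, y⟫ = ⟪x, D y⟫)
    (hder : ∀ x y : E, D (b x y) = b (D x) y + b x (D y))
    (d : I → ℝ) (hd : ∀ i, D (e i) = d i • e i)
    (X Y : E) (α β : ℝ) (hX : D X = α • X) (hY : D Y = β • Y) (hαβ : α ≠ β) :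
    -4 * (∑ i, ∑ j, ⟪b X (e i), e j⟫ * ⟪b Y (e i), e j⟫)
      + 2 * (∑ i, ∑ j, ⟪b (e i) (e j), X⟫ * ⟪b (e i) (e j), Y⟫) = 0 := by
  have hbX : ∀ i, D (b X (e i)) = (α + d i) • b X (e i) := by
    intro i
    rw [hder, hX, hd, map_smul, map_smul, add_smul]
    rfl
  have hbY : ∀ i, D (b Y (e i)) = (β + d i) • b Y (e i) := by
    intro i
    rw [hder, hY, hd, map_smul, map_smul, add_smul]
    rfl
  have hbe : ∀ i j, D (b (e i) (e j)) = (d i + d j) • b (e i) (e j) := by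
    intro i j
    rw [hder, hd, hd, map_smul, map_smul, add_smul]
    rfl
  have h1 : ∀ i j, ⟪b X (e i), e j⟫ * ⟪b Y (e i), e j⟫ = 0 := by
    intro i j
    by_cases h : α + d i = d j
    · have hne : β + d i ≠ d j := fun hc => hαβ (by linarith)
      rw [eig_orth D hsymm (hbY i) (hd j) hne, mul_zero]
    · rw [eig_orth D hsymm (hbX i) (hd j) h, zero_mul]
  have h2 : ∀ i j, ⟪b (e i) (e j), X⟫ * ⟪b (e i) (e j), Y⟫ = 0 := by
    intro i j
    by_cases h : d i + d j = α
    · have hne : d i + d j ≠ β := fun hc => hαβ (by linarith)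
      rw [eig_orth D hsymm (hbe i j) hY hne, mul_zero]
    · rw [eig_orth D hsymm (hbe i j) hX h, zero_mul]
  simp [h1, h2]
end

section
/- Let (E, ⟨·,·⟩) be a finite-dimensional real inner product space with orthonormal basis (e_i)_{i∈I}, and let E₁ and E₂ be mutually orthogonal subspaces with E = E₁ ⊕ E₂ such that every basis vector e_i lies in E₁ or in E₂. Let b : E × E → E be an ℝ-bilinear map with b(E₁ × E₁) ⊆ E₁, b(E₂ × E₂) ⊆ E₂, and b(x,y) = 0 = b(y,x) whenever x ∈ E₁ and y ∈ E₂. Then for every X ∈ E₁ and Y ∈ E₂, F_b(X,Y) = 0; that is, the moment map of the change-of-basis representation is block diagonal, lying in 𝔤𝔩(E₁) × 𝔤𝔩(E₂), along brackets that split as a direct sum. -/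
open scoped RealInnerProductSpace

/-- Let `E = E₁ ⊕ E₂` be an orthogonal decomposition of a finite-dimensional real inner
product space with orthonormal basis `(e i)` adapted to the decomposition, and let `b`
be a bilinear map with `b(E₁ × E₁) ⊆ E₁`, `b(E₂ × E₂) ⊆ E₂`, and `b` vanishing on mixed
pairs.  Then for `X ∈ E₁` and `Y ∈ E₂` the moment-map pairing
`F_b(X,Y) = −4 Σ ⟨b(X,e_i),e_j⟩⟨b(Y,e_i),e_j⟩ + 2 Σ ⟨b(e_i,e_j),X⟩⟨b(e_i,e_j),Y⟩`
vanishes: the moment map is block diagonal along brackets that split as a direct sum. -/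
theorem momentMap_block_diagonal_along_direct_sums
    (E : Type*) [NormedAddCommGroup E] [InnerProductSpace ℝ E] [FiniteDimensional ℝ E]
    (I : Type*) [Fintype I] (e : OrthonormalBasis I ℝ E)
    (E₁ E₂ : Submodule ℝ E)
    (horth : ∀ x ∈ E₁, ∀ y ∈ E₂, ⟪x, y⟫ = 0)
    (hcompl : IsCompl E₁ E₂)
    (hbasis : ∀ i, e i ∈ E₁ ∨ e i ∈ E₂)
    (b : E →ₗ[ℝ] E →ₗ[ℝ] E)
    (hb1 : ∀ x ∈ E₁, ∀ y ∈ E₁, b x y ∈ E₁)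
    (hb2 : ∀ x ∈ E₂, ∀ y ∈ E₂, b x y ∈ E₂)
    (hb12 : ∀ x ∈ E₁, ∀ y ∈ E₂, b x y = 0 ∧ b y x = 0)
    (X : E) (hX : X ∈ E₁) (Y : E) (hY : Y ∈ E₂) :
    -4 * (∑ i, ∑ j, ⟪b X (e i), e j⟫ * ⟪b Y (e i), e j⟫)
      + 2 * (∑ i, ∑ j, ⟪b (e i) (e j), X⟫ * ⟪b (e i) (e j), Y⟫) = 0 := by
  have h1 : (∑ i, ∑ j, ⟪b X (e i), e j⟫ * ⟪b Y (e i), e j⟫) = 0 := by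
    apply Finset.sum_eq_zero; intro i _
    apply Finset.sum_eq_zero; intro j _
    rcases hbasis i with hi | hi
    · rw [(hb12 (e i) hi Y hY).2, inner_zero_left, mul_zero]
    · rw [(hb12 X hX (e i) hi).1, inner_zero_left, zero_mul]
  have h2 : (∑ i, ∑ j, ⟪b (e i) (e j), X⟫ * ⟪b (e i) (e j), Y⟫) = 0 := by
    apply Finset.sum_eq_zero; intro i _
    apply Finset.sum_eq_zero; intro j _
    rcases hbasis i with hi | hi <;> rcases hbasis j with hj | hj
    · rw [horth _ (hb1 _ hi _ hj) _ hY, mul_zero]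
    · rw [(hb12 _ hi _ hj).1, inner_zero_left, zero_mul]
    · rw [(hb12 _ hj _ hi).2, inner_zero_left, zero_mul]
    · rw [real_inner_comm]; rw [horth X hX _ (hb2 _ hi _ hj), zero_mul]
  rw [h1, h2]; ring
end
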